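/- Let P and Q be orthogonal projections on a Hilbert space with ‖P − Q‖ < 1 and X: Ran P → Ran P⊥ the bounded operator such that Ran Q = {f ⊕ Xf : f ∈ Ran P}. Then the compression P Q restricted to Ran P, viewed as an operator on Ran P, equals (I_{Ran P} + X*X)^{-1}; in particular it is a bijection of Ran P onto itself. -/

import Mathlib

/-!
Write `Q f = g + X g` with `g ∈ Ran P`; then `P Q f = g`. Since `f - Q f` is orthogonal to the
graph `Ran Q`, and orthogonality of `Ran P` and `Ran P⊥` turns the pairing with a graph vector
into `⟪f - (g + X g), h + X h⟫ = ⟪f - (I + X*X) g, h⟫`, we get `(I + X*X) (P Q f) = f`.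
As `Re ⟪(I + X*X) g, g⟫ = ‖g‖² + ‖X g‖²`, the operator `I + X*X` is injective, so this one-sided
inverse is two-sided.
-/

section

open ContinuousLinearMap LinearMap
open scoped InnerProductSpace

variable {𝕜 E : Type*} [RCLike 𝕜] [NormedAddCommGroup E] [InnerProductSpace 𝕜 E]

section Projection

variable [CompleteSpace E] {P : E →L[𝕜] E}

theorem IsStarProjection.isOrtho_range_range_one_sub (hP : IsStarProjection P) :
    LinearMap.range (P : E →ₗ[𝕜] E) ⟂
      LinearMap.range ((1 - P : E →L[𝕜] E) : E →ₗ[𝕜] E) := by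
  have hPlin := hP.isIdempotentElem.toLinearMap
  rw [ContinuousLinearMap.toLinearMap_sub, ContinuousLinearMap.toLinearMap_one,
    ← hPlin.ker_eq_range_one_sub]
  exact hPlin.isSymmetric_iff_isOrtho_range_ker.mp hP.isSelfAdjoint.isSymmetric

theorem IsStarProjection.inner_sub_apply_eq_zero (hP : IsStarProjection P) (x : E) {y : E}
    (hy : y ∈ LinearMap.range (P : E →ₗ[𝕜] E)) : ⟪x - P x, y⟫_𝕜 = 0 := by
  obtain ⟨z, rfl⟩ := hy
  have hsymm : ⟪P x, P z⟫_𝕜 = ⟪x, P (P z)⟫_𝕜 := hP.isSelfAdjoint.isSymmetric x (P z)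
  have hidem : P (P z) = P z := DFunLike.congr_fun hP.isIdempotentElem.eq z
  rw [inner_sub_left, ContinuousLinearMap.coe_coe, hsymm, hidem, sub_self]

end Projection

theorem IsIdempotentElem.apply_add_of_mem_range_of_mem_range_one_sub {P : E →L[𝕜] E}
    (hP : IsIdempotentElem P) {u v : E} (hu : u ∈ LinearMap.range (P : E →ₗ[𝕜] E))
    (hv : v ∈ LinearMap.range ((1 - P : E →L[𝕜] E) : E →ₗ[𝕜] E)) : P (u + v) = u := by
  rw [ContinuousLinearMap.toLinearMap_sub, ContinuousLinearMap.toLinearMap_one,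
    ← hP.toLinearMap.ker_eq_range_one_sub] at hv
  rw [map_add, ← ContinuousLinearMap.coe_coe, hP.toLinearMap.mem_range_iff.mp hu,
    LinearMap.mem_ker.mp hv, add_zero]

section AdjointCompSelf

variable {F G : Type*} [NormedAddCommGroup F] [InnerProductSpace 𝕜 F] [CompleteSpace F]
  [NormedAddCommGroup G] [InnerProductSpace 𝕜 G] [CompleteSpace G]

theorem ContinuousLinearMap.injective_one_add_adjoint_comp_self (X : F →L[𝕜] G) :
    Function.Injective (1 + X.adjoint ∘L X : F →L[𝕜] F) := by
  refine (injective_iff_map_eq_zero _).mpr fun g hg => ?_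
  have hinner : ⟪(1 + X.adjoint ∘L X) g, g⟫_𝕜 = ⟪g, g⟫_𝕜 + ⟪X g, X g⟫_𝕜 := by
    rw [_root_.add_apply, one_apply_eq_self, ContinuousLinearMap.comp_apply, inner_add_left,
      ContinuousLinearMap.adjoint_inner_left]
  rw [hg, inner_zero_left] at hinner
  have hsum : ‖g‖ ^ 2 + ‖X g‖ ^ 2 = 0 := by
    simpa only [map_zero, map_add, inner_self_eq_norm_sq, eq_comm] using congrArg RCLike.re hinner
  have hg_sq := ((add_eq_zero_iff_of_nonneg (sq_nonneg _) (sq_nonneg _)).mp hsum).1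
  exact norm_eq_zero.mp (pow_eq_zero_iff two_ne_zero |>.mp hg_sq)

end AdjointCompSelf

section Graph

variable {U V : Submodule 𝕜 E} [CompleteSpace U] [CompleteSpace V]

theorem Submodule.IsOrtho.inner_sub_graph_eq (hUV : U ⟂ V) (X : U →L[𝕜] V) (f g h : U) :
    ⟪(f : E) - (g + X g), h + X h⟫_𝕜 = ⟪f - (1 + X.adjoint ∘L X) g, h⟫_𝕜 := by
  have hfXh : ⟪(f : E), X h⟫_𝕜 = 0 := hUV.inner_eq f.2 (X h).2
  have hgXh : ⟪(g : E), X h⟫_𝕜 = 0 := hUV.inner_eq g.2 (X h).2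
  have hXgh : ⟪(X g : E), h⟫_𝕜 = 0 := hUV.symm.inner_eq (X g).2 h.2
  have hadj : ⟪(X.adjoint (X g) : E), h⟫_𝕜 = ⟪(X g : E), X h⟫_𝕜 :=
    X.adjoint_inner_left h (X g)
  simp only [inner_sub_left, inner_add_left, inner_add_right, _root_.add_apply,
    one_apply_eq_self, ContinuousLinearMap.comp_apply, hadj, hfXh, hgXh, hXgh, Submodule.coe_inner]
  ring

theorem Submodule.IsOrtho.one_add_adjoint_comp_self_apply_eq_of_graph [CompleteSpace E]
    (hUV : U ⟂ V) (X : U →L[𝕜] V) {Q : E →L[𝕜] E} (hQ : IsStarProjection Q)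
    (hgraph : ∀ h : U, (h : E) + X h ∈ LinearMap.range (Q : E →ₗ[𝕜] E))
    {f g : U} (hfg : Q f = g + X g) : (1 + X.adjoint ∘L X) g = f := by
  have hperp (h : U) : ⟪f - (1 + X.adjoint ∘L X) g, h⟫_𝕜 = 0 := by
    rw [← hUV.inner_sub_graph_eq, ← hfg]
    exact hQ.inner_sub_apply_eq_zero _ (hgraph h)
  exact (sub_eq_zero.mp (inner_self_eq_zero.mp (hperp _))).symm

end Graph

end

theorem stmt8_general
    {H : Type*} [NormedAddCommGroup H] [InnerProductSpace ℂ H] [CompleteSpace H]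
    (P Q : H →L[ℂ] H)
    (hPproj : IsIdempotentElem P) (hPsa : IsSelfAdjoint P)
    (hQproj : IsIdempotentElem Q) (hQsa : IsSelfAdjoint Q)
    [CompleteSpace (LinearMap.range (P : H →ₗ[ℂ] H))] [CompleteSpace (LinearMap.range ((1 - P : H →L[ℂ] H) : H →ₗ[ℂ] H))]
    (X : LinearMap.range (P : H →ₗ[ℂ] H) →L[ℂ] LinearMap.range ((1 - P : H →L[ℂ] H) : H →ₗ[ℂ] H))
    (hgraph : (LinearMap.range (Q : H →ₗ[ℂ] H) : Set H) =
      {h : H | ∃ f : LinearMap.range (P : H →ₗ[ℂ] H), h = (f : H) + (X f : H)}) :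
    -- `T f = P (Q f)` as an endomorphism of `Ran P`
    (∀ f : LinearMap.range (P : H →ₗ[ℂ] H),
        (1 + X.adjoint ∘L X) (⟨P (Q (f : H)), ⟨Q (f : H), rfl⟩⟩ : LinearMap.range (P : H →ₗ[ℂ] H)) = f) ∧
      Function.Bijective
        (fun f : LinearMap.range (P : H →ₗ[ℂ] H) =>
          (⟨P (Q (f : H)), ⟨Q (f : H), rfl⟩⟩ : LinearMap.range (P : H →ₗ[ℂ] H))) := by
  have hUV := IsStarProjection.isOrtho_range_range_one_sub ⟨hPproj, hPsa⟩
  have hgraph_mem (h : LinearMap.range (P : H →ₗ[ℂ] H)) :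
      (h : H) + X h ∈ LinearMap.range (Q : H →ₗ[ℂ] H) := by
    rw [← SetLike.mem_coe, hgraph]
    exact ⟨h, rfl⟩
  have hinv (f : LinearMap.range (P : H →ₗ[ℂ] H)) :
      (1 + X.adjoint ∘L X) (⟨P (Q f), ⟨Q f, rfl⟩⟩ : LinearMap.range (P : H →ₗ[ℂ] H)) = f := by
    have hQf : Q f ∈ (LinearMap.range (Q : H →ₗ[ℂ] H) : Set H) := ⟨f, rfl⟩
    rw [hgraph] at hQf
    obtain ⟨g, hg⟩ := hQf
    have hcompress : (⟨P (Q f), ⟨Q f, rfl⟩⟩ : LinearMap.range (P : H →ₗ[ℂ] H)) = g :=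
      Subtype.ext (hg ▸ hPproj.apply_add_of_mem_range_of_mem_range_one_sub g.2 (X g).2)
    rw [hcompress]
    exact hUV.one_add_adjoint_comp_self_apply_eq_of_graph X ⟨hQproj, hQsa⟩ hgraph_mem hg
  have hinv' := Function.LeftInverse.rightInverse_of_injective hinv
    X.injective_one_add_adjoint_comp_self
  exact ⟨hinv, Function.bijective_iff_has_inverse.mpr ⟨_, hinv, hinv'⟩⟩

/-- Let `P` and `Q` be orthogonal projections on a complex Hilbert space with `‖P − Q‖ < 1`, and
let `X : Ran P → Ran P⊥` be the bounded operator with `Ran Q = {f ⊕ Xf : f ∈ Ran P}`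
(`P⊥ = 1 − P`).  Then the compression `P Q` restricted to `Ran P`, viewed as an operator on
`Ran P`, equals `(I + X*X)⁻¹`; in particular it is a bijection of `Ran P` onto itself. -/
theorem stmt8
    {H : Type*} [NormedAddCommGroup H] [InnerProductSpace ℂ H] [CompleteSpace H]
    (P Q : H →L[ℂ] H)
    (hPproj : IsIdempotentElem P) (hPsa : IsSelfAdjoint P)
    (hQproj : IsIdempotentElem Q) (hQsa : IsSelfAdjoint Q)
    (hPQ : ‖P - Q‖ < 1)
    [CompleteSpace (LinearMap.range (P : H →ₗ[ℂ] H))] [CompleteSpace (LinearMap.range ((1 - P : H →L[ℂ] H) : H →ₗ[ℂ] H))]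
    (X : LinearMap.range (P : H →ₗ[ℂ] H) →L[ℂ] LinearMap.range ((1 - P : H →L[ℂ] H) : H →ₗ[ℂ] H))
    (hgraph : (LinearMap.range (Q : H →ₗ[ℂ] H) : Set H) =
      {h : H | ∃ f : LinearMap.range (P : H →ₗ[ℂ] H), h = (f : H) + (X f : H)}) :
    -- `T f = P (Q f)` as an endomorphism of `Ran P`
    (∀ f : LinearMap.range (P : H →ₗ[ℂ] H),
        (1 + X.adjoint ∘L X) (⟨P (Q (f : H)), ⟨Q (f : H), rfl⟩⟩ : LinearMap.range (P : H →ₗ[ℂ] H)) = f) ∧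
      Function.Bijective
        (fun f : LinearMap.range (P : H →ₗ[ℂ] H) =>
          (⟨P (Q (f : H)), ⟨Q (f : H), rfl⟩⟩ : LinearMap.range (P : H →ₗ[ℂ] H))) :=
  stmt8_general P Q hPproj hPsa hQproj hQsa X hgraph
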